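/- arXiv:0709.3755 — 16 statements merged into one kernel-verified Lean document; each statement's English description precedes it below -/
import Mathlib

section
/- tan(3π/11) + 4·sin(2π/11) = √11. -/
set_option maxHeartbeats 1000000

theorem stmt0 : Real.tan (3*Real.pi/11) + 4*Real.sin (2*Real.pi/11) = Real.sqrt 11 := by
  have pi_pos := Real.pi_pos
  have h2 : 2*Real.pi/11 = 2*(Real.pi/11) := by ring
  have h3 : 3*Real.pi/11 = 3*(Real.pi/11) := by ring
  rw [h2, h3]
  set x : ℝ := Real.pi/11 with hx
  set s := Real.sin x with hsdef
  set c := Real.cos x with hcdef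
  have hpyth : s^2 + c^2 = 1 := Real.sin_sq_add_cos_sq x
  have hs2 : Real.sin (2*x) = 2*s*c := by rw [Real.sin_two_mul]
  have hc2 : Real.cos (2*x) = 2*c^2 - 1 := by rw [Real.cos_two_mul]
  have hs3 : Real.sin (3*x) = 3*s - 4*s^3 := by
    rw [Real.sin_three_mul]
  have hc3 : Real.cos (3*x) = 4*c^3 - 3*c := by
    rw [Real.cos_three_mul]
  have hs9 : Real.sin (9*x) = 3*(3*s - 4*s^3) - 4*(3*s - 4*s^3)^3 := by
    rw [show (9:ℝ)*x = 3*(3*x) by ring, Real.sin_three_mul, hs3]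
  have hc9 : Real.cos (9*x) = 4*(4*c^3 - 3*c)^3 - 3*(4*c^3 - 3*c) := by
    rw [show (9:ℝ)*x = 3*(3*x) by ring, Real.cos_three_mul, hc3]
  have hc11 : Real.cos (9*x + 2*x) = -1 := by
    rw [show (9:ℝ)*x + 2*x = Real.pi by rw [hx]; ring]; exact Real.cos_pi
  rw [Real.cos_add, hc9, hc2, hs9, hs2] at hc11
  have hm2 : (c+1) * (32*c^5 - 16*c^4 - 32*c^3 + 12*c^2 + 6*c - 1)^2 = 0 := by
    linear_combination hc11 + (2*c - 80*c^3 + 480*c^5 - 896*c^7 + 512*c^9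
      - 16*s^2*c - 96*s^2*c^3 + 384*s^2*c^5 - 512*s^2*c^7
      + 224*s^4*c + 128*s^4*c^3 + 512*s^4*c^5
      - 640*s^6*c - 512*s^6*c^3 + 512*s^8*c) * hpyth
  have hcpos : 0 < c := by
    rw [hcdef]
    apply Real.cos_pos_of_mem_Ioo
    constructor <;> [nlinarith; nlinarith]
  have hm : 32*c^5 - 16*c^4 - 32*c^3 + 12*c^2 + 6*c - 1 = 0 := by
    rcases mul_eq_zero.mp hm2 with h | h
    · linarith
    · exact pow_eq_zero_iff (by norm_num) |>.mp h
  have hs2pos : 0 < Real.sin (2*x) := by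
    apply Real.sin_pos_of_pos_of_lt_pi <;> rw [hx] <;> nlinarith
  have hs3pos : 0 < Real.sin (3*x) := by
    apply Real.sin_pos_of_pos_of_lt_pi <;> rw [hx] <;> nlinarith
  have hc3pos : 0 < Real.cos (3*x) := by
    apply Real.cos_pos_of_mem_Ioo
    constructor <;> rw [hx] <;> nlinarith
  have key : (Real.sin (3*x) + 4*Real.sin (2*x) * Real.cos (3*x))^2
      = 11 * Real.cos (3*x)^2 := by
    rw [hs3, hc3, hs2]
    linear_combination (-32*c^5 - 16*c^4 + 32*c^3 + 12*c^2 - 6*c - 1) * hm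
      + (1 + 40*c^2 + 336*c^4 - 1280*c^6 + 1024*c^8
        - 8*s^2 + 176*s^2*c^2 - 256*s^2*c^4 + 16*s^4) * hpyth
  have hApos : 0 < Real.sin (3*x) + 4*Real.sin (2*x) * Real.cos (3*x) := by
    have : 0 < 4*Real.sin (2*x) * Real.cos (3*x) := by positivity
    linarith
  rw [Real.tan_eq_sin_div_cos, div_add' _ _ _ hc3pos.ne', div_eq_iff hc3pos.ne']
  have hrhs : Real.sqrt 11 * Real.cos (3*x) = Real.sqrt (11 * Real.cos (3*x)^2) := by
    rw [Real.sqrt_mul (by norm_num), Real.sqrt_sq hc3pos.le]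
  rw [hrhs, ← key, Real.sqrt_sq hApos.le]
end

section
/- tan(π/11) + 4·sin(3π/11) = √11. -/
/-!
Since `6π/11 = π - 5π/11`, the sum `cos 6θ + cos 5θ` vanishes at `θ = π/11`; as a polynomial in
`cos θ` it is `cos θ + 1` times the quintic `32c⁵ - 16c⁴ - 32c³ + 12c² + 6c - 1`, so `c = cos (π/11)`
is a root of that quintic. On the other hand `(tan θ + 4 sin 3θ) cos θ = sin θ (16c³ - 4c + 1)`;
squaring and replacing `sin²θ` by `1 - c²`, the quintic reduces the right side to `11c²`.
So the (positive) left side squares to `11`.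
-/

open Real

namespace Real

theorem cos_six_mul_add_cos_five_mul (x : ℝ) :
    cos (6 * x) + cos (5 * x) = (cos x + 1) *
      (32 * cos x ^ 5 - 16 * cos x ^ 4 - 32 * cos x ^ 3 + 12 * cos x ^ 2 + 6 * cos x - 1) := by
  have h6 : cos (6 * x) = 2 * cos (3 * x) ^ 2 - 1 := by
    rw [← cos_two_mul]; ring_nf
  have h5 : cos (5 * x) + cos x = 2 * cos (3 * x) * cos (2 * x) := by
    rw [cos_add_cos]; ring_nf
  rw [h6, eq_sub_of_add_eq h5, cos_three_mul, cos_two_mul]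
  ring

theorem cos_pi_div_eleven_quintic :
    32 * cos (π / 11) ^ 5 - 16 * cos (π / 11) ^ 4 - 32 * cos (π / 11) ^ 3
      + 12 * cos (π / 11) ^ 2 + 6 * cos (π / 11) - 1 = 0 := by
  have hsum : cos (6 * (π / 11)) + cos (5 * (π / 11)) = 0 := by
    rw [show 6 * (π / 11) = π - 5 * (π / 11) by ring, cos_pi_sub, neg_add_cancel]
  have hpos : 0 < cos (π / 11) + 1 := by
    have := cos_pos_of_mem_Ioo (x := π / 11) ⟨by linarith [pi_pos], by linarith [pi_pos]⟩
    linarith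
  rw [cos_six_mul_add_cos_five_mul] at hsum
  exact (mul_eq_zero.mp hsum).resolve_left hpos.ne'

theorem tan_add_four_mul_sin_three_mul_mul_cos {x : ℝ} (hx : cos x ≠ 0) :
    (tan x + 4 * sin (3 * x)) * cos x = sin x * (16 * cos x ^ 3 - 4 * cos x + 1) := by
  rw [tan_eq_sin_div_cos, sin_three_mul, add_mul, div_mul_cancel₀ _ hx]
  linear_combination (-16 * sin x * cos x) * sin_sq_add_cos_sq x

theorem sq_tan_pi_div_eleven_add_four_mul_sin :
    (tan (π / 11) + 4 * sin (3 * (π / 11))) ^ 2 = 11 := by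
  have hc0 : cos (π / 11) ≠ 0 := (cos_pos_of_mem_Ioo ⟨by linarith [pi_pos], by linarith [pi_pos]⟩).ne'
  have hprod := tan_add_four_mul_sin_three_mul_mul_cos hc0
  set c := cos (π / 11)
  refine mul_right_cancel₀ (pow_ne_zero 2 hc0) ?_
  linear_combination congrArg (· ^ 2) hprod
    + (16 * c ^ 3 - 4 * c + 1) ^ 2 * sin_sq_add_cos_sq (π / 11)
    - (8 * c ^ 3 + 4 * c ^ 2 - 2 * c + 1) * cos_pi_div_eleven_quintic

end Real

theorem stmt1 : Real.tan (Real.pi/11) + 4*Real.sin (3*Real.pi/11) = Real.sqrt 11 := by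
  have htan : 0 < tan (π / 11) :=
    tan_pos_of_pos_of_lt_pi_div_two (by positivity) (by linarith [pi_pos])
  have hsin : 0 < sin (3 * (π / 11)) := sin_pos_of_pos_of_lt_pi (by positivity) (by linarith [pi_pos])
  rw [mul_div_assoc, eq_comm, sqrt_eq_iff_eq_sq (by norm_num) (by positivity)]
  exact sq_tan_pi_div_eleven_add_four_mul_sin.symm
end

section
/- tan(2π/11) − 4·sin(5π/11) = −√11. -/
open Real

theorem stmt3 : Real.tan (2*Real.pi/11) - 4*Real.sin (5*Real.pi/11) = -Real.sqrt 11 := by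
  have hpi := Real.pi_pos
  set θ : ℝ := 2*Real.pi/11 with hθ
  set x : ℝ := Real.cos θ with hxdef
  set s : ℝ := Real.sin θ with hsdef
  have hθ1 : 0 < θ := by positivity
  have hθ2 : θ < π/2 := by rw [hθ]; linarith
  have hcos : 0 < x := Real.cos_pos_of_mem_Ioo ⟨by linarith, hθ2⟩
  have hsin : 0 < s := Real.sin_pos_of_pos_of_lt_pi hθ1 (by linarith)
  have hs : s^2 = 1 - x^2 := by
    have := Real.sin_sq_add_cos_sq θ; linarith
  have hx1 : x ≠ 1 := by
    intro h; rw [h] at hs; nlinarith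
  -- cos 6θ = cos 5θ since 6θ = 2π - 5θ
  have h65 : Real.cos (6*θ) = Real.cos (5*θ) := by
    rw [show (6:ℝ)*θ = 2*π - 5*θ by rw [hθ]; ring, Real.cos_two_pi_sub]
  have h3 : Real.cos (3*θ) = 4*x^3 - 3*x := Real.cos_three_mul θ
  have h2 : Real.cos (2*θ) = 2*x^2 - 1 := by rw [Real.cos_two_mul]
  have h6 : Real.cos (6*θ) = 2*(4*x^3-3*x)^2 - 1 := by
    rw [show (6:ℝ)*θ = 2*(3*θ) by ring, Real.cos_two_mul, h3]
  have h5 : Real.cos (5*θ) = 2*(4*x^3-3*x)*(2*x^2-1) - x := by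
    have := Real.cos_add_cos (5*θ) θ
    rw [show (5*θ+θ)/2 = 3*θ by ring, show (5*θ-θ)/2 = 2*θ by ring, h3, h2] at this
    linarith
  have hfac : (x - 1) * (32*x^5 + 16*x^4 - 32*x^3 - 12*x^2 + 6*x + 1) = 0 := by
    rw [h6, h5] at h65; linear_combination h65
  have hp : 32*x^5 + 16*x^4 - 32*x^3 - 12*x^2 + 6*x + 1 = 0 := by
    rcases mul_eq_zero.1 hfac with h | h
    · exact absurd (by linarith : x = 1) hx1
    · exact h
  have hsin3 : Real.sin (3*θ) = 3*s - 4*s^3 := Real.sin_three_mul θ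
  -- rewrite sin(5π/11) as sin(3θ)
  have hrw : Real.sin (5*Real.pi/11) = Real.sin (3*θ) := by
    rw [show (3:ℝ)*θ = π - 5*π/11 by rw [hθ]; ring, Real.sin_pi_sub]
  have htan : Real.tan θ = s / x := Real.tan_eq_sin_div_cos θ
  -- key squared identity
  have key : (4 * Real.sin (3*θ) * x - s)^2 = 11 * x^2 := by
    rw [hsin3]
    linear_combination (256*s^4*x^2 - 128*s^2*x^2 + 32*s^2*x - 256*s^2*x^4 + 256*x^6
      - 128*x^4 - 32*x^3 + 16*x^2 + 8*x + 1) * hs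
      + (-8*x^3 + 4*x^2 + 2*x + 1) * hp
  -- positivity of a = 4 sin 3θ - tan θ
  have htanlt : Real.tan θ < 1 := by
    have : s < x := by
      have hx' : x = Real.sin (π/2 - θ) := by rw [Real.sin_pi_div_two_sub]
      rw [hx', hsdef]
      apply Real.sin_lt_sin_of_lt_of_le_pi_div_two (by linarith) (by linarith)
      rw [hθ]; linarith
    rw [htan, div_lt_one hcos]; exact this
  have hsin3half : (1:ℝ)/2 < Real.sin (3*θ) := by
    rw [← hrw]
    have := Real.sin_lt_sin_of_lt_of_le_pi_div_two (x := π/6) (y := 5*π/11)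
      (by linarith) (by linarith) (by linarith)
    rw [Real.sin_pi_div_six] at this
    linarith
  have hapos : 0 ≤ 4 * Real.sin (3*θ) - Real.tan θ := by linarith
  have hsq : (4 * Real.sin (3*θ) - Real.tan θ)^2 = 11 := by
    rw [htan]
    have hx0 : x ≠ 0 := ne_of_gt hcos
    field_simp
    linear_combination key
  have : Real.sqrt 11 = 4 * Real.sin (3*θ) - Real.tan θ := by
    rw [← hsq, Real.sqrt_sq hapos]
  rw [hrw, this]; ring
end

section
/- tan(5π/11) − 4·sin(4π/11) = √11. -/
/-!
Put θ = π/11. Since 2 sin 4θ cos 5θ = sin 9θ - sin θ and sin 9θ = sin 2θ, the left side is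
A / cos 5θ with A = sin 5θ - 2 sin 2θ + 2 sin θ. Expanding A² by the product-to-sum formulas and
folding cos kθ = -cos (11 - k)θ leaves a combination of cos 2θ, …, cos 10θ, whose sum is -1/2
(multiply by 2 sin θ and telescope); what remains is A² = 11 cos² 5θ. Finally
A = (sin 5θ - sin 3θ) + sin θ (2 cos θ - 1)² > 0, so A = √11 cos 5θ.
-/

open Real Finset

lemma two_mul_sin_mul_sum_cos_two_mul (x : ℝ) (n : ℕ) :
    2 * sin x * ∑ k ∈ range n, cos (2 * (k + 1) * x) = sin ((2 * n + 1) * x) - sin x := by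
  induction n with
  | zero => simp
  | succ n ih =>
    rw [sum_range_succ, mul_add, ih, two_mul_sin_mul_cos,
      show x - 2 * ((n : ℝ) + 1) * x = -((2 * n + 1) * x) by ring, sin_neg]
    push_cast
    ring_nf

lemma sum_cos_two_mul_eq_neg_half {x : ℝ} {n : ℕ} (hx : sin x ≠ 0)
    (h : sin ((2 * n + 1) * x) = 0) : ∑ k ∈ range n, cos (2 * (k + 1) * x) = -1 / 2 := by
  have key := two_mul_sin_mul_sum_cos_two_mul x n
  rw [h, zero_sub] at key
  apply mul_left_cancel₀ (mul_ne_zero two_ne_zero hx)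
  linear_combination key

lemma sin_five_mul_sub_two_mul_sin_two_mul_add_pos {θ : ℝ} (h0 : 0 < θ) (h : 10 * θ ≤ π) :
    0 < sin (5 * θ) - 2 * sin (2 * θ) + 2 * sin θ := by
  have h53 : sin (3 * θ) < sin (5 * θ) :=
    sin_lt_sin_of_lt_of_le_pi_div_two (by linarith [pi_pos]) (by linarith) (by linarith)
  have hs : 0 < sin θ := sin_pos_of_pos_of_lt_pi h0 (by linarith)
  have key : sin (5 * θ) - 2 * sin (2 * θ) + 2 * sin θ
      = (sin (5 * θ) - sin (3 * θ)) + sin θ * (2 * cos θ - 1) ^ 2 := by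
    rw [sin_three_mul, sin_two_mul]
    linear_combination (-4 * sin θ) * sin_sq_add_cos_sq θ
  rw [key]
  exact add_pos_of_pos_of_nonneg (sub_pos.2 h53) (mul_nonneg hs.le (sq_nonneg _))

section

variable {θ : ℝ} (hθ : 11 * θ = π)
include hθ

lemma cos_five_mul_pos : 0 < cos (5 * θ) :=
  cos_pos_of_mem_Ioo ⟨by linarith [pi_pos], by linarith [pi_pos]⟩

lemma tan_five_mul_sub_four_mul_sin_four_mul :
    tan (5 * θ) - 4 * sin (4 * θ) = (sin (5 * θ) - 2 * sin (2 * θ) + 2 * sin θ) / cos (5 * θ) := by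
  have hc := (cos_five_mul_pos hθ).ne'
  have h9 : sin (9 * θ) = sin (2 * θ) := by rw [← sin_pi_sub, ← hθ]; ring_nf
  have h45 : 2 * sin (4 * θ) * cos (5 * θ) = sin (9 * θ) - sin θ := by
    rw [two_mul_sin_mul_cos, show 4 * θ - 5 * θ = -θ by ring, sin_neg]; ring_nf
  rw [tan_eq_sin_div_cos, eq_div_iff hc, sub_mul, div_mul_cancel₀ _ hc]
  linear_combination -2 * h45 - 2 * h9

lemma sq_sin_five_mul_sub_two_mul_sin_two_mul_add :
    (sin (5 * θ) - 2 * sin (2 * θ) + 2 * sin θ) ^ 2 = 11 * cos (5 * θ) ^ 2 := by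
  have hsum : cos (2 * θ) + cos (4 * θ) + cos (6 * θ) + cos (8 * θ) + cos (10 * θ) = -1 / 2 := by
    have hs : sin θ ≠ 0 :=
      (sin_pos_of_pos_of_lt_pi (by linarith [pi_pos]) (by linarith [pi_pos])).ne'
    have := sum_cos_two_mul_eq_neg_half (n := 5) hs (by norm_num [hθ])
    norm_num [sum_range_succ] at this
    linarith
  have reflect (k : ℝ) : cos (k * θ) = -cos ((11 - k) * θ) := by
    rw [← cos_pi_sub, ← hθ]; ring_nf
  have c1 : cos θ = -cos (10 * θ) := by simpa [show (11 : ℝ) - 1 = 10 by norm_num] using reflect 1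
  have c3 : cos (3 * θ) = -cos (8 * θ) := by norm_num [reflect 3]
  have c7 : cos (7 * θ) = -cos (4 * θ) := by norm_num [reflect 7]
  have p52 : 2 * sin (5 * θ) * sin (2 * θ) = cos (3 * θ) - cos (7 * θ) := by
    rw [two_mul_sin_mul_sin]; ring_nf
  have p51 : 2 * sin (5 * θ) * sin θ = cos (4 * θ) - cos (6 * θ) := by
    rw [two_mul_sin_mul_sin]; ring_nf
  have p21 : 2 * sin (2 * θ) * sin θ = cos θ - cos (3 * θ) := by
    rw [two_mul_sin_mul_sin]; ring_nf
  have s5 : 2 * sin (5 * θ) ^ 2 = 1 - cos (10 * θ) := by rw [sin_sq_eq_half_sub]; ring_nf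
  have s2 : 2 * sin (2 * θ) ^ 2 = 1 - cos (4 * θ) := by rw [sin_sq_eq_half_sub]; ring_nf
  have s1 : 2 * sin θ ^ 2 = 1 - cos (2 * θ) := by rw [sin_sq_eq_half_sub]; ring
  have c5 : 2 * cos (5 * θ) ^ 2 = 1 + cos (10 * θ) := by rw [cos_sq]; ring_nf
  linear_combination (1 / 2) * s5 + 2 * s2 + 2 * s1 - 2 * p52 + 2 * p51 - 4 * p21
    - (11 / 2) * c5 + 2 * c3 + 2 * c7 - 4 * c1 - 2 * hsum

end

theorem stmt4 : Real.tan (5*Real.pi/11) - 4*Real.sin (4*Real.pi/11) = Real.sqrt 11 := by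
  have hθ : 11 * (π / 11) = π := by ring
  have hc := cos_five_mul_pos hθ
  have hpos := sin_five_mul_sub_two_mul_sin_two_mul_add_pos (θ := π / 11) (by positivity)
    (by linarith [pi_pos])
  rw [show 5 * π / 11 = 5 * (π / 11) by ring, show 4 * π / 11 = 4 * (π / 11) by ring,
    tan_five_mul_sub_four_mul_sin_four_mul hθ, div_eq_iff hc.ne',
    ← sq_eq_sq₀ hpos.le (by positivity), mul_pow, sq_sqrt (by norm_num)]
  exact sq_sin_five_mul_sub_two_mul_sin_two_mul_add hθ
end

section
/- For every integer k not divisible by 11, tan(3kπ/11) + 4·sin(2kπ/11) = √11 or tan(3kπ/11) + 4·sin(2kπ/11) = −√11. -/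
/-!
With `s = sin x` and `c = cos x`, the triple- and double-angle formulas give
`tan 3x + 4 sin 2x = s (32c⁴ - 20c² - 1) / cos 3x`. Squaring and using `s² = 1 - c²`, the identity
`(tan 3x + 4 sin 2x)² = 11` becomes `U₁₀(c) = 0` for the Chebyshev polynomial `U₁₀`; this holds at
`x = kπ/11` because `sin 11x = U₁₀(cos x) sin x` and `sin x ≠ 0` there.
-/

open Real Polynomial Polynomial.Chebyshev

theorem Polynomial.Chebyshev.U_ten (R : Type*) [CommRing R] :
    U R 10 = 1024 * X ^ 10 - 2304 * X ^ 8 + 1792 * X ^ 6 - 560 * X ^ 4 + 60 * X ^ 2 - 1 := by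
  have h3 := U_add_two R 1; have h4 := U_add_two R 2; have h5 := U_add_two R 3
  have h6 := U_add_two R 4; have h7 := U_add_two R 5; have h8 := U_add_two R 6
  have h9 := U_add_two R 7; have h10 := U_add_two R 8
  norm_num at h3 h4 h5 h6 h7 h8 h9 h10
  rw [h10, h9, h8, h7, h6, h5, h4, h3, U_two]; ring

theorem Real.sin_eleven_mul (x : ℝ) :
    sin (11 * x) = sin x * (1024 * cos x ^ 10 - 2304 * cos x ^ 8 + 1792 * cos x ^ 6
      - 560 * cos x ^ 4 + 60 * cos x ^ 2 - 1) := by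
  have h := U_real_cos x 10
  norm_num [U_ten] at h
  rw [← h]; ring

theorem Real.sin_int_mul_pi_div_ne_zero {k n : ℤ} (hn : n ≠ 0) (hk : ¬ n ∣ k) :
    sin (k * π / n) ≠ 0 := by
  rw [Ne, sin_eq_zero_iff]
  rintro ⟨m, hm⟩
  refine hk ⟨m, ?_⟩
  have hk' : (k : ℝ) = n * m := by
    field_simp at hm
    linear_combination -hm
  exact_mod_cast hk'

theorem Real.cos_int_mul_pi_div_ne_zero_of_odd {k n : ℤ} (hn : Odd n) :
    cos (k * π / n) ≠ 0 := by
  have hn0 : (n : ℝ) ≠ 0 := by exact_mod_cast (show n ≠ 0 by rintro rfl; simp at hn)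
  rw [Ne, cos_eq_zero_iff]
  rintro ⟨m, hm⟩
  have hk : 2 * k = (2 * m + 1) * n := by
    have hk' : (2 * k : ℝ) = (2 * m + 1) * n := by
      field_simp at hm
      linear_combination hm
    exact_mod_cast hk'
  have hodd : Odd ((2 * m + 1) * n) := (odd_two_mul_add_one m).mul hn
  rw [← hk] at hodd
  exact Int.not_even_iff_odd.2 hodd (even_two_mul k)

theorem Real.sq_tan_three_mul_add_four_mul_sin_two_mul {x : ℝ} (hsin11 : sin (11 * x) = 0)
    (hs : sin x ≠ 0) (hc : cos (3 * x) ≠ 0) :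
    (tan (3 * x) + 4 * sin (2 * x)) ^ 2 = 11 := by
  have hU : 1024 * cos x ^ 10 - 2304 * cos x ^ 8 + 1792 * cos x ^ 6 - 560 * cos x ^ 4
      + 60 * cos x ^ 2 - 1 = 0 := by
    simpa [sin_eleven_mul, hs] using hsin11
  have hsum : tan (3 * x) + 4 * sin (2 * x) =
      sin x * (32 * cos x ^ 4 - 20 * cos x ^ 2 - 1) / cos (3 * x) := by
    rw [tan_eq_sin_div_cos, eq_div_iff hc, add_mul, div_mul_cancel₀ _ hc, sin_three_mul,
      sin_two_mul, cos_three_mul]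
    linear_combination (-4 * sin x) * sin_sq_add_cos_sq x
  rw [hsum, div_pow, div_eq_iff (pow_ne_zero 2 hc), cos_three_mul]
  linear_combination (32 * cos x ^ 4 - 20 * cos x ^ 2 - 1) ^ 2 * sin_sq_add_cos_sq x - hU

theorem stmt5 (k : ℤ) (hk : ¬ (11 : ℤ) ∣ k) :
    Real.tan (3*k*Real.pi/11) + 4*Real.sin (2*k*Real.pi/11) = Real.sqrt 11 ∨
    Real.tan (3*k*Real.pi/11) + 4*Real.sin (2*k*Real.pi/11) = -Real.sqrt 11 := by
  set x := (k : ℝ) * π / 11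
  have hsin11 : sin (11 * x) = 0 := by
    rw [show 11 * x = k * π by ring]
    exact sin_int_mul_pi k
  have hs : sin x ≠ 0 := by
    simpa using sin_int_mul_pi_div_ne_zero (by norm_num) hk
  have hc : cos (3 * x) ≠ 0 := by
    simpa [x, mul_div_assoc, mul_assoc] using
      cos_int_mul_pi_div_ne_zero_of_odd (k := 3 * k) (n := 11) (by decide)
  rw [show 3 * k * π / 11 = 3 * x by ring, show 2 * k * π / 11 = 2 * x by ring,
    ← sq_eq_sq_iff_eq_or_eq_neg, sq_sqrt (by norm_num)]
  exact sq_tan_three_mul_add_four_mul_sin_two_mul hsin11 hs hc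
end

section
/- tan(π/9) + 4·sin(π/9) = √3. -/
theorem stmt6 : Real.tan (Real.pi/9) + 4*Real.sin (Real.pi/9) = Real.sqrt 3 := by
  have hpi := Real.pi_pos
  set s := Real.sin (Real.pi/9) with hs
  set c := Real.cos (Real.pi/9) with hcdef
  have hclt : Real.pi/9 < Real.pi/2 := by linarith
  have hcpos : 0 < c := Real.cos_pos_of_mem_Ioo ⟨by linarith, hclt⟩
  have hspos : 0 < s := Real.sin_pos_of_pos_of_lt_pi (by linarith) (by linarith)
  have h3 : Real.cos (3 * (Real.pi/9)) = 1/2 := by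
    rw [show 3 * (Real.pi/9) = Real.pi/3 by ring, Real.cos_pi_div_three]
  have hcube : 4 * c^3 - 3 * c = 1/2 := by
    rw [Real.cos_three_mul] at h3; linarith
  have hsq : s^2 + c^2 = 1 := Real.sin_sq_add_cos_sq _
  have key : s + 4 * s * c = Real.sqrt 3 * c := by
    have h3pos : (0:ℝ) ≤ 3 := by norm_num
    have hsqrt : Real.sqrt 3 ^ 2 = 3 := Real.sq_sqrt h3pos
    have hsqeq : (s + 4 * s * c)^2 = (Real.sqrt 3 * c)^2 := by
      rw [mul_pow, hsqrt]
      nlinarith [hsq, hcube]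
    have h1 : 0 ≤ s + 4 * s * c := by positivity
    have h2 : 0 ≤ Real.sqrt 3 * c := by positivity
    nlinarith [hsqeq, h1, h2, Real.sqrt_pos.mpr (by norm_num : (0:ℝ) < 3)]
  rw [Real.tan_eq_sin_div_cos]
  rw [← hs, ← hcdef]
  field_simp
  linarith [key]
end

section
/- tan(2π/9) − 4·sin(2π/9) = −√3. -/
theorem stmt7 : Real.tan (2*Real.pi/9) - 4*Real.sin (2*Real.pi/9) = -Real.sqrt 3 := by
  have hpi := Real.pi_pos
  have hcos : Real.cos (2*Real.pi/9) > 0 := by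
    apply Real.cos_pos_of_mem_Ioo
    constructor <;> [nlinarith; nlinarith]
  have h1 : Real.sin (2*Real.pi/9 + Real.pi/3) = Real.sin (2*(2*Real.pi/9)) := by
    rw [show 2*Real.pi/9 + Real.pi/3 = Real.pi - 2*(2*Real.pi/9) by ring, Real.sin_pi_sub]
  rw [Real.sin_add, Real.sin_two_mul, Real.cos_pi_div_three, Real.sin_pi_div_three] at h1
  rw [Real.tan_eq_sin_div_cos]
  field_simp
  nlinarith [h1, hcos]
end

section
/- tan(4π/9) − 4·sin(4π/9) = √3. -/
theorem stmt8 : Real.tan (4*Real.pi/9) - 4*Real.sin (4*Real.pi/9) = Real.sqrt 3 := by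
  have hpi := Real.pi_pos
  have hc : Real.cos (4*Real.pi/9) > 0 := by
    apply Real.cos_pos_of_mem_Ioo
    constructor <;> [linarith; linarith]
  have h1 : Real.sin (4*Real.pi/9) - Real.sqrt 3 * Real.cos (4*Real.pi/9)
      = 2 * Real.sin (Real.pi/9) := by
    have h := Real.sin_sub (4*Real.pi/9) (Real.pi/3)
    rw [show 4*Real.pi/9 - Real.pi/3 = Real.pi/9 by ring,
      Real.cos_pi_div_three, Real.sin_pi_div_three] at h
    linarith
  have h2 : 2 * Real.sin (4*Real.pi/9) * Real.cos (4*Real.pi/9)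
      = Real.sin (Real.pi/9) := by
    have h := Real.sin_two_mul (4*Real.pi/9)
    rw [show 2*(4*Real.pi/9) = Real.pi - Real.pi/9 by ring, Real.sin_pi_sub] at h
    linarith
  rw [Real.tan_eq_sin_div_cos]
  field_simp
  linear_combination h1 - 2*h2
end

section
/- tan(π/7) − 4·sin(2π/7) = −√7. -/
theorem stmt10 : Real.tan (Real.pi/7) - 4*Real.sin (2*Real.pi/7) = -Real.sqrt 7 := by
  set c := Real.cos (Real.pi/7) with hc
  set s := Real.sin (Real.pi/7) with hs
  have hpi := Real.pi_pos
  -- c > 1/2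
  have hclt : (1:ℝ)/2 < c := by
    have h := Real.cos_lt_cos_of_nonneg_of_le_pi (by positivity : (0:ℝ) ≤ Real.pi/7)
      (by linarith : Real.pi/3 ≤ Real.pi) (by linarith : Real.pi/7 < Real.pi/3)
    rw [Real.cos_pi_div_three] at h
    exact h
  have hcpos : 0 < c := by linarith
  have hspos : 0 < s := Real.sin_pos_of_pos_of_lt_pi (by positivity) (by linarith)
  have hsc : s^2 + c^2 = 1 := by
    rw [hs, hc]; exact Real.sin_sq_add_cos_sq _
  -- cubic
  have h34 : Real.cos (3*(Real.pi/7)) = -Real.cos (4*(Real.pi/7)) := by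
    rw [show (3:ℝ)*(Real.pi/7) = Real.pi - 4*(Real.pi/7) by ring, Real.cos_pi_sub]
  have h3 : Real.cos (3*(Real.pi/7)) = 4*c^3 - 3*c := by
    rw [Real.cos_three_mul]
  have h2 : Real.cos (2*(Real.pi/7)) = 2*c^2 - 1 := by
    rw [Real.cos_two_mul]
  have h4 : Real.cos (4*(Real.pi/7)) = 2*(2*c^2-1)^2 - 1 := by
    rw [show (4:ℝ)*(Real.pi/7) = 2*(2*(Real.pi/7)) by ring, Real.cos_two_mul, h2]
  have hfac : (c+1)*(8*c^3 - 4*c^2 - 4*c + 1) = 0 := by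
    have := h34
    rw [h3, h4] at this
    nlinarith [this]
  have hcubic : 8*c^3 - 4*c^2 - 4*c + 1 = 0 := by
    have hne : c + 1 ≠ 0 := by linarith
    rcases mul_eq_zero.mp hfac with h | h
    · exact absurd h hne
    · exact h
  -- key: s*(8*c^2-1) = sqrt 7 * c
  have h8 : 0 < 8*c^2 - 1 := by nlinarith
  have hsq7 : Real.sqrt 7 ^ 2 = 7 := Real.sq_sqrt (by norm_num)
  have h7n : 0 ≤ Real.sqrt 7 := Real.sqrt_nonneg 7
  have hkey : s*(8*c^2-1) = Real.sqrt 7 * c := by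
    have hsqs : (s*(8*c^2-1))^2 = (Real.sqrt 7 * c)^2 := by
      have h1 : s^2 = 1 - c^2 := by linarith
      nlinarith [hcubic, h1, hsq7]
    have ha : 0 ≤ s*(8*c^2-1) := by positivity
    have hb : 0 ≤ Real.sqrt 7 * c := by positivity
    calc s*(8*c^2-1) = Real.sqrt ((s*(8*c^2-1))^2) := (Real.sqrt_sq ha).symm
      _ = Real.sqrt ((Real.sqrt 7 * c)^2) := by rw [hsqs]
      _ = Real.sqrt 7 * c := Real.sqrt_sq hb
  -- finish
  have hsin2 : Real.sin (2*Real.pi/7) = 2*s*c := by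
    rw [show (2:ℝ)*Real.pi/7 = 2*(Real.pi/7) by ring, Real.sin_two_mul]
  rw [Real.tan_eq_sin_div_cos, hsin2, ← hc, ← hs]
  have hcne : c ≠ 0 := ne_of_gt hcpos
  field_simp
  nlinarith [hkey]
end

section
/- tan(2π/7) − 4·sin(3π/7) = −√7. -/
open Real

theorem stmt11 : Real.tan (2*Real.pi/7) - 4*Real.sin (3*Real.pi/7) = -Real.sqrt 7 := by
  have pi_pos := Real.pi_pos
  set θ : ℝ := 2*Real.pi/7 with hθ
  set c : ℝ := Real.cos θ with hc
  set s : ℝ := Real.sin θ with hs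
  -- basic bounds
  have hθpos : 0 < θ := by positivity
  have hθlt : θ < Real.pi/3 := by rw [hθ]; linarith
  have hclt : c < 1 := by
    have h := Real.cos_lt_cos_of_nonneg_of_le_pi (le_refl 0) (by linarith) hθpos
    simpa using h
  have hcgt : (1:ℝ)/2 < c := by
    have h := Real.cos_lt_cos_of_nonneg_of_le_pi (by positivity) (by linarith) hθlt
    have : Real.cos (Real.pi/3) = 1/2 := Real.cos_pi_div_three
    rw [this] at h
    exact h
  have hspos : 0 < s := Real.sin_pos_of_pos_of_lt_pi hθpos (by rw [hθ]; linarith)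
  have hcpos : 0 < c := by linarith
  -- minimal polynomial of c
  have key : Real.cos (4*θ) = Real.cos (3*θ) := by
    have : 4*θ = 2*Real.pi - 3*θ := by rw [hθ]; ring
    rw [this, Real.cos_two_pi_sub]
  have h4 : Real.cos (4*θ) = 8*c^4 - 8*c^2 + 1 := by
    have : (4:ℝ)*θ = 2*(2*θ) := by ring
    rw [this, Real.cos_two_mul, Real.cos_two_mul]
    ring
  have h3 : Real.cos (3*θ) = 4*c^3 - 3*c := Real.cos_three_mul θ
  have hfac : (c - 1) * (8*c^3 + 4*c^2 - 4*c - 1) = 0 := by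
    rw [h4, h3] at key
    linear_combination key
  have hmin : 8*c^3 + 4*c^2 - 4*c - 1 = 0 := by
    rcases mul_eq_zero.1 hfac with h | h
    · exact absurd h (by intro h'; linarith)
    · exact h
  -- rewrite the LHS
  have hsin3 : Real.sin (3*Real.pi/7) = 2*s*c := by
    have h1 : (3:ℝ)*Real.pi/7 = Real.pi - 2*θ := by rw [hθ]; ring
    rw [h1, Real.sin_pi_sub, Real.sin_two_mul]
  have htan : Real.tan θ = s / c := Real.tan_eq_sin_div_cos θ
  have hsq : s^2 = 1 - c^2 := by
    have := Real.sin_sq_add_cos_sq θ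
    nlinarith [this]
  set L : ℝ := Real.tan (2*Real.pi/7) - 4*Real.sin (3*Real.pi/7) with hL
  have hLval : L = s * (1 - 8*c^2) / c := by
    rw [hL, ← hθ, htan, hsin3]
    field_simp
    ring
  have hLneg : L < 0 := by
    rw [hLval]
    have h1 : 1 - 8*c^2 < 0 := by nlinarith
    have : s * (1 - 8*c^2) < 0 := mul_neg_of_pos_of_neg hspos h1
    exact div_neg_of_neg_of_pos this hcpos
  have hL2 : L^2 = 7 := by
    rw [hLval]
    rw [div_pow]
    rw [div_eq_iff (by positivity : c^2 ≠ 0)]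
    have : s^2 * (1 - 8*c^2)^2 = (1 - c^2) * (1 - 8*c^2)^2 := by rw [hsq]
    calc (s * (1 - 8*c^2))^2 = s^2 * (1-8*c^2)^2 := by ring
      _ = (1 - c^2) * (1-8*c^2)^2 := by rw [hsq]
      _ = 7 * c^2 := by linear_combination (-8*c^3 + 4*c^2 + 4*c - 1) * hmin
  have : Real.sqrt 7 = -L := by
    rw [show (7:ℝ) = (-L)^2 by rw [neg_pow]; simp [hL2], Real.sqrt_sq (by linarith)]
  linarith
end

section
/- tan(3π/7) − 4·sin(π/7) = √7. -/
theorem stmt12 : Real.tan (3*Real.pi/7) - 4*Real.sin (Real.pi/7) = Real.sqrt 7 := by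
  have pi_pos := Real.pi_pos
  set x : ℝ := Real.pi / 7 with hxdef
  have hx7 : 7 * x = Real.pi := by rw [hxdef]; ring
  set c : ℝ := Real.cos x with hc
  set s : ℝ := Real.sin x with hs
  have hs2 : s ^ 2 = 1 - c ^ 2 := Real.sin_sq x
  have hxpos : 0 < x := by positivity
  have hxlt : x < Real.pi / 2 := by linarith
  have hcpos : 0 < c := Real.cos_pos_of_mem_Ioo ⟨by linarith, hxlt⟩
  have hspos : 0 < s := Real.sin_pos_of_pos_of_lt_pi hxpos (by linarith)
  have hcle : c ≤ 1 := Real.cos_le_one x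
  -- cos(7x) = -1
  have hcos7 : Real.cos (7 * x) = -1 := by rw [hx7, Real.cos_pi]
  have h2c : Real.cos (2 * x) = 2 * c ^ 2 - 1 := by
    rw [Real.cos_two_mul]
  have h2s : Real.sin (2 * x) = 2 * s * c := by
    rw [Real.sin_two_mul]
  have h3c : Real.cos (3 * x) = 4 * c ^ 3 - 3 * c := Real.cos_three_mul x
  have h3s : Real.sin (3 * x) = 3 * s - 4 * s ^ 3 := Real.sin_three_mul x
  have h4c : Real.cos (4 * x) = 2 * (Real.cos (2 * x)) ^ 2 - 1 := by
    rw [show (4:ℝ) * x = 2 * (2 * x) by ring, Real.cos_two_mul]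
  have h4s : Real.sin (4 * x) = 2 * Real.sin (2 * x) * Real.cos (2 * x) := by
    rw [show (4:ℝ) * x = 2 * (2 * x) by ring, Real.sin_two_mul]
  have h7 : Real.cos (7 * x) = Real.cos (3 * x) * Real.cos (4 * x)
      - Real.sin (3 * x) * Real.sin (4 * x) := by
    rw [show (7:ℝ) * x = 3 * x + 4 * x by ring, Real.cos_add]
  rw [hcos7, h3c, h3s, h4c, h4s, h2c, h2s] at h7
  have hq : 64 * c ^ 7 - 112 * c ^ 5 + 56 * c ^ 3 - 7 * c + 1 = 0 := by
    linear_combination (-1 : ℝ) * h7 +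
      (-32 * s ^ 2 * c ^ 3 + 16 * s ^ 2 * c - 24 * c ^ 3 + 4 * c + 32 * c ^ 5) * hs2
  have hfac : (c + 1) * (8 * c ^ 3 - 4 * c ^ 2 - 4 * c + 1) ^ 2 = 0 := by
    linear_combination hq
  have hm : 8 * c ^ 3 - 4 * c ^ 2 - 4 * c + 1 = 0 := by
    rcases mul_eq_zero.mp hfac with h | h
    · nlinarith
    · exact pow_eq_zero_iff (by norm_num) |>.mp h
  -- positivity facts
  have hP : 0 < -16 * c ^ 3 + 4 * c ^ 2 + 12 * c - 1 := by nlinarith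
  have hD : 0 < Real.cos (3 * x) := by
    apply Real.cos_pos_of_mem_Ioo
    constructor <;> linarith
  have hDval : 0 < 4 * c ^ 3 - 3 * c := h3c ▸ hD
  -- key squared identity
  have hN2 : (s * (-16 * c ^ 3 + 4 * c ^ 2 + 12 * c - 1)) ^ 2
      = 7 * (4 * c ^ 3 - 3 * c) ^ 2 := by
    linear_combination (-16 * c ^ 3 + 4 * c ^ 2 + 12 * c - 1) ^ 2 * hs2 +
      (-32 * c ^ 5 + 48 * c ^ 3 - 4 * c ^ 2 - 20 * c + 1) * hm
  have hsqrt7 : (0:ℝ) < Real.sqrt 7 := Real.sqrt_pos.mpr (by norm_num)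
  have hsq7 : Real.sqrt 7 ^ 2 = 7 := Real.sq_sqrt (by norm_num)
  have hkey : s * (-16 * c ^ 3 + 4 * c ^ 2 + 12 * c - 1)
      = Real.sqrt 7 * (4 * c ^ 3 - 3 * c) := by
    have hz : (s * (-16 * c ^ 3 + 4 * c ^ 2 + 12 * c - 1)
        - Real.sqrt 7 * (4 * c ^ 3 - 3 * c)) *
        (s * (-16 * c ^ 3 + 4 * c ^ 2 + 12 * c - 1)
        + Real.sqrt 7 * (4 * c ^ 3 - 3 * c)) = 0 := by
      linear_combination hN2 - (4 * c ^ 3 - 3 * c) ^ 2 * hsq7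
    rcases mul_eq_zero.mp hz with h | h
    · linarith
    · linarith [mul_pos hspos hP, mul_pos hsqrt7 hDval]
  -- finish
  have hfinal : Real.sin (3 * x) = (Real.sqrt 7 + 4 * s) * Real.cos (3 * x) := by
    rw [h3s, h3c]
    linear_combination hkey - 4 * s * hs2
  have h3x : 3 * Real.pi / 7 = 3 * x := by linarith
  rw [h3x, Real.tan_eq_sin_div_cos, hfinal, mul_div_assoc, div_self (ne_of_gt hD), mul_one]
  ring
end

section
/- tan(2π/7) + 4·sin(2π/7) − 4·sin(π/7) = √7. -/
/-!
With `c = cos (π/7)`, the identity `cos (4π/7) = -cos (3π/7)` gives the minimal cubic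
`8c³ - 4c² - 4c + 1 = 0`. Modulo this cubic, `4 (sin (2π/7) - sin (π/7)) cos (2π/7) = 2 sin (π/7)`,
so the left-hand side equals `(sin (2π/7) + 2 sin (π/7)) / cos (2π/7)`, and the same cubic shows
that the square of this quotient is `7`.
-/

open Real

lemma cos_pi_div_seven_cubic :
    8 * cos (π / 7) ^ 3 - 4 * cos (π / 7) ^ 2 - 4 * cos (π / 7) + 1 = 0 := by
  set c := cos (π / 7)
  have hcos4 : cos (4 * (π / 7)) = -cos (3 * (π / 7)) := by
    rw [show 4 * (π / 7) = π - 3 * (π / 7) by ring, cos_pi_sub]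
  rw [show 4 * (π / 7) = 2 * (2 * (π / 7)) by ring, cos_two_mul, cos_two_mul,
    cos_three_mul] at hcos4
  have hfactor : (c + 1) * (8 * c ^ 3 - 4 * c ^ 2 - 4 * c + 1) = 0 := by linear_combination hcos4
  have hc : 0 < c := cos_pos_of_mem_Ioo ⟨by linarith [pi_pos], by linarith [pi_pos]⟩
  exact (mul_eq_zero.mp hfactor).resolve_left (by positivity)

lemma four_mul_sin_sub_sin_mul_cos_pi_div_seven :
    4 * (sin (2 * (π / 7)) - sin (π / 7)) * cos (2 * (π / 7)) = 2 * sin (π / 7) := by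
  rw [sin_two_mul, cos_two_mul]
  linear_combination (2 * sin (π / 7)) * cos_pi_div_seven_cubic

lemma sq_sin_two_mul_add_two_mul_sin_pi_div_seven :
    (sin (2 * (π / 7)) + 2 * sin (π / 7)) ^ 2 = 7 * cos (2 * (π / 7)) ^ 2 := by
  have hc := cos_pi_div_seven_cubic
  have hs := sin_sq (π / 7)
  rw [sin_two_mul, cos_two_mul]
  linear_combination (-4 * cos (π / 7) - 3) * hc + 4 * (cos (π / 7) + 1) ^ 2 * hs

theorem stmt13 : Real.tan (2*Real.pi/7) + 4*Real.sin (2*Real.pi/7) - 4*Real.sin (Real.pi/7) = Real.sqrt 7 := by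
  rw [show 2 * π / 7 = 2 * (π / 7) by ring]
  have hcos : 0 < cos (2 * (π / 7)) :=
    cos_pos_of_mem_Ioo ⟨by linarith [pi_pos], by linarith [pi_pos]⟩
  have hsin : 0 < sin (π / 7) := sin_pos_of_pos_of_lt_pi (by positivity) (by linarith [pi_pos])
  have hsin2 : 0 < sin (2 * (π / 7)) :=
    sin_pos_of_pos_of_lt_pi (by positivity) (by linarith [pi_pos])
  have hlhs : tan (2 * (π / 7)) + 4 * sin (2 * (π / 7)) - 4 * sin (π / 7)
      = (sin (2 * (π / 7)) + 2 * sin (π / 7)) / cos (2 * (π / 7)) := by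
    rw [tan_eq_sin_div_cos, eq_div_iff hcos.ne', add_sub_assoc, add_mul,
      div_mul_cancel₀ _ hcos.ne', ← mul_sub, ← four_mul_sin_sub_sin_mul_cos_pi_div_seven]
  have hnum : sin (2 * (π / 7)) + 2 * sin (π / 7) = √7 * cos (2 * (π / 7)) := by
    rw [← sqrt_sq (by positivity : 0 ≤ sin (2 * (π / 7)) + 2 * sin (π / 7)),
      sq_sin_two_mul_add_two_mul_sin_pi_div_seven, sqrt_mul (by norm_num), sqrt_sq hcos.le]
  rw [hlhs, hnum, mul_div_cancel_right₀ _ hcos.ne']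
end

section
/- tan(4π/19) + 4·sin(5π/19) − 4·sin(6π/19) + 4·sin(9π/19) = √19. -/
set_option maxHeartbeats 2000000

theorem stmt14 : Real.tan (4*Real.pi/19) + 4*Real.sin (5*Real.pi/19) - 4*Real.sin (6*Real.pi/19) + 4*Real.sin (9*Real.pi/19) = Real.sqrt 19 := by
  have pi_pos := Real.pi_pos
  have pi_lt := Real.pi_lt_d2
  have hs : (Real.sin (Real.pi/19))^2 = 1 - (Real.cos (Real.pi/19))^2 := by nlinarith [Real.sin_sq_add_cos_sq (Real.pi/19)]
  have c2 : Real.cos (2*(Real.pi/19)) = (-1) + (2)*Real.cos (Real.pi/19)^2 := by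
    rw [show (2:ℝ)*(Real.pi/19) = (Real.pi/19) + (Real.pi/19) by ring, Real.cos_add]
    linear_combination (-((1))) * hs
  have s2 : Real.sin (2*(Real.pi/19)) = ((2)*Real.cos (Real.pi/19)) * Real.sin (Real.pi/19) := by
    rw [show (2:ℝ)*(Real.pi/19) = (Real.pi/19) + (Real.pi/19) by ring, Real.sin_add]
    ring
  have c3 : Real.cos (3*(Real.pi/19)) = (-3)*Real.cos (Real.pi/19) + (4)*Real.cos (Real.pi/19)^3 := by
    rw [show (3:ℝ)*(Real.pi/19) = 2*(Real.pi/19) + (Real.pi/19) by ring, Real.cos_add, c2, s2]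
    linear_combination (-((2)*Real.cos (Real.pi/19))) * hs
  have s3 : Real.sin (3*(Real.pi/19)) = ((-1) + (4)*Real.cos (Real.pi/19)^2) * Real.sin (Real.pi/19) := by
    rw [show (3:ℝ)*(Real.pi/19) = 2*(Real.pi/19) + (Real.pi/19) by ring, Real.sin_add, c2, s2]
    ring
  have c4 : Real.cos (4*(Real.pi/19)) = (1) + (-8)*Real.cos (Real.pi/19)^2 + (8)*Real.cos (Real.pi/19)^4 := by
    rw [show (4:ℝ)*(Real.pi/19) = 3*(Real.pi/19) + (Real.pi/19) by ring, Real.cos_add, c3, s3]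
    linear_combination (-((-1) + (4)*Real.cos (Real.pi/19)^2)) * hs
  have s4 : Real.sin (4*(Real.pi/19)) = ((-4)*Real.cos (Real.pi/19) + (8)*Real.cos (Real.pi/19)^3) * Real.sin (Real.pi/19) := by
    rw [show (4:ℝ)*(Real.pi/19) = 3*(Real.pi/19) + (Real.pi/19) by ring, Real.sin_add, c3, s3]
    ring
  have c5 : Real.cos (5*(Real.pi/19)) = (5)*Real.cos (Real.pi/19) + (-20)*Real.cos (Real.pi/19)^3 + (16)*Real.cos (Real.pi/19)^5 := by
    rw [show (5:ℝ)*(Real.pi/19) = 4*(Real.pi/19) + (Real.pi/19) by ring, Real.cos_add, c4, s4]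
    linear_combination (-((-4)*Real.cos (Real.pi/19) + (8)*Real.cos (Real.pi/19)^3)) * hs
  have s5 : Real.sin (5*(Real.pi/19)) = ((1) + (-12)*Real.cos (Real.pi/19)^2 + (16)*Real.cos (Real.pi/19)^4) * Real.sin (Real.pi/19) := by
    rw [show (5:ℝ)*(Real.pi/19) = 4*(Real.pi/19) + (Real.pi/19) by ring, Real.sin_add, c4, s4]
    ring
  have c6 : Real.cos (6*(Real.pi/19)) = (-1) + (18)*Real.cos (Real.pi/19)^2 + (-48)*Real.cos (Real.pi/19)^4 + (32)*Real.cos (Real.pi/19)^6 := by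
    rw [show (6:ℝ)*(Real.pi/19) = 5*(Real.pi/19) + (Real.pi/19) by ring, Real.cos_add, c5, s5]
    linear_combination (-((1) + (-12)*Real.cos (Real.pi/19)^2 + (16)*Real.cos (Real.pi/19)^4)) * hs
  have s6 : Real.sin (6*(Real.pi/19)) = ((6)*Real.cos (Real.pi/19) + (-32)*Real.cos (Real.pi/19)^3 + (32)*Real.cos (Real.pi/19)^5) * Real.sin (Real.pi/19) := by
    rw [show (6:ℝ)*(Real.pi/19) = 5*(Real.pi/19) + (Real.pi/19) by ring, Real.sin_add, c5, s5]
    ring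
  have c7 : Real.cos (7*(Real.pi/19)) = (-7)*Real.cos (Real.pi/19) + (56)*Real.cos (Real.pi/19)^3 + (-112)*Real.cos (Real.pi/19)^5 + (64)*Real.cos (Real.pi/19)^7 := by
    rw [show (7:ℝ)*(Real.pi/19) = 6*(Real.pi/19) + (Real.pi/19) by ring, Real.cos_add, c6, s6]
    linear_combination (-((6)*Real.cos (Real.pi/19) + (-32)*Real.cos (Real.pi/19)^3 + (32)*Real.cos (Real.pi/19)^5)) * hs
  have s7 : Real.sin (7*(Real.pi/19)) = ((-1) + (24)*Real.cos (Real.pi/19)^2 + (-80)*Real.cos (Real.pi/19)^4 + (64)*Real.cos (Real.pi/19)^6) * Real.sin (Real.pi/19) := by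
    rw [show (7:ℝ)*(Real.pi/19) = 6*(Real.pi/19) + (Real.pi/19) by ring, Real.sin_add, c6, s6]
    ring
  have c8 : Real.cos (8*(Real.pi/19)) = (1) + (-32)*Real.cos (Real.pi/19)^2 + (160)*Real.cos (Real.pi/19)^4 + (-256)*Real.cos (Real.pi/19)^6 + (128)*Real.cos (Real.pi/19)^8 := by
    rw [show (8:ℝ)*(Real.pi/19) = 7*(Real.pi/19) + (Real.pi/19) by ring, Real.cos_add, c7, s7]
    linear_combination (-((-1) + (24)*Real.cos (Real.pi/19)^2 + (-80)*Real.cos (Real.pi/19)^4 + (64)*Real.cos (Real.pi/19)^6)) * hs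
  have s8 : Real.sin (8*(Real.pi/19)) = ((-8)*Real.cos (Real.pi/19) + (80)*Real.cos (Real.pi/19)^3 + (-192)*Real.cos (Real.pi/19)^5 + (128)*Real.cos (Real.pi/19)^7) * Real.sin (Real.pi/19) := by
    rw [show (8:ℝ)*(Real.pi/19) = 7*(Real.pi/19) + (Real.pi/19) by ring, Real.sin_add, c7, s7]
    ring
  have c9 : Real.cos (9*(Real.pi/19)) = (9)*Real.cos (Real.pi/19) + (-120)*Real.cos (Real.pi/19)^3 + (432)*Real.cos (Real.pi/19)^5 + (-576)*Real.cos (Real.pi/19)^7 + (256)*Real.cos (Real.pi/19)^9 := by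
    rw [show (9:ℝ)*(Real.pi/19) = 8*(Real.pi/19) + (Real.pi/19) by ring, Real.cos_add, c8, s8]
    linear_combination (-((-8)*Real.cos (Real.pi/19) + (80)*Real.cos (Real.pi/19)^3 + (-192)*Real.cos (Real.pi/19)^5 + (128)*Real.cos (Real.pi/19)^7)) * hs
  have s9 : Real.sin (9*(Real.pi/19)) = ((1) + (-40)*Real.cos (Real.pi/19)^2 + (240)*Real.cos (Real.pi/19)^4 + (-448)*Real.cos (Real.pi/19)^6 + (256)*Real.cos (Real.pi/19)^8) * Real.sin (Real.pi/19) := by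
    rw [show (9:ℝ)*(Real.pi/19) = 8*(Real.pi/19) + (Real.pi/19) by ring, Real.sin_add, c8, s8]
    ring
  have c10 : Real.cos (10*(Real.pi/19)) = (-1) + (50)*Real.cos (Real.pi/19)^2 + (-400)*Real.cos (Real.pi/19)^4 + (1120)*Real.cos (Real.pi/19)^6 + (-1280)*Real.cos (Real.pi/19)^8 + (512)*Real.cos (Real.pi/19)^10 := by
    rw [show (10:ℝ)*(Real.pi/19) = 9*(Real.pi/19) + (Real.pi/19) by ring, Real.cos_add, c9, s9]
    linear_combination (-((1) + (-40)*Real.cos (Real.pi/19)^2 + (240)*Real.cos (Real.pi/19)^4 + (-448)*Real.cos (Real.pi/19)^6 + (256)*Real.cos (Real.pi/19)^8)) * hs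
  have s10 : Real.sin (10*(Real.pi/19)) = ((10)*Real.cos (Real.pi/19) + (-160)*Real.cos (Real.pi/19)^3 + (672)*Real.cos (Real.pi/19)^5 + (-1024)*Real.cos (Real.pi/19)^7 + (512)*Real.cos (Real.pi/19)^9) * Real.sin (Real.pi/19) := by
    rw [show (10:ℝ)*(Real.pi/19) = 9*(Real.pi/19) + (Real.pi/19) by ring, Real.sin_add, c9, s9]
    ring
  have h10 : Real.cos (10*(Real.pi/19)) = - Real.cos (9*(Real.pi/19)) := by
    rw [show (10:ℝ)*(Real.pi/19) = Real.pi - 9*(Real.pi/19) by ring, Real.cos_pi_sub]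
  have hprod : (Real.cos (Real.pi/19) + 1) * ((-1) + (10)*Real.cos (Real.pi/19) + (40)*Real.cos (Real.pi/19)^2 + (-160)*Real.cos (Real.pi/19)^3 + (-240)*Real.cos (Real.pi/19)^4 + (672)*Real.cos (Real.pi/19)^5 + (448)*Real.cos (Real.pi/19)^6 + (-1024)*Real.cos (Real.pi/19)^7 + (-256)*Real.cos (Real.pi/19)^8 + (512)*Real.cos (Real.pi/19)^9) = 0 := by
    linear_combination h10 - c10 - c9
  have hcpos : 0 < Real.cos (Real.pi/19) := Real.cos_pos_of_mem_Ioo ⟨by linarith, by linarith⟩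
  have hm : ((-1) + (10)*Real.cos (Real.pi/19) + (40)*Real.cos (Real.pi/19)^2 + (-160)*Real.cos (Real.pi/19)^3 + (-240)*Real.cos (Real.pi/19)^4 + (672)*Real.cos (Real.pi/19)^5 + (448)*Real.cos (Real.pi/19)^6 + (-1024)*Real.cos (Real.pi/19)^7 + (-256)*Real.cos (Real.pi/19)^8 + (512)*Real.cos (Real.pi/19)^9) = 0 := by
    rcases mul_eq_zero.mp hprod with h | h
    · nlinarith
    · exact h
  have hA2 : (Real.sin (4*(Real.pi/19)) + 2*Real.sin (Real.pi/19) - 2*Real.sin (2*(Real.pi/19)) + 2*Real.sin (5*(Real.pi/19)) + 2*Real.sin (6*(Real.pi/19)))^2 = 19 * (Real.cos (4*(Real.pi/19)))^2 := by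
    rw [s4, s2, s5, s6, c4]
    linear_combination (((4) + (4)*Real.cos (Real.pi/19) + (-24)*Real.cos (Real.pi/19)^2 + (-56)*Real.cos (Real.pi/19)^3 + (32)*Real.cos (Real.pi/19)^4 + (64)*Real.cos (Real.pi/19)^5))^2 * hs + ((3) + (-2)*Real.cos (Real.pi/19) + (-12)*Real.cos (Real.pi/19)^2 + (-8)*Real.cos (Real.pi/19)^3) * hm
  have hApos : 0 ≤ (Real.sin (4*(Real.pi/19)) + 2*Real.sin (Real.pi/19) - 2*Real.sin (2*(Real.pi/19)) + 2*Real.sin (5*(Real.pi/19)) + 2*Real.sin (6*(Real.pi/19))) := by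
    have h1 : Real.sin (2*(Real.pi/19)) < Real.sin (6*(Real.pi/19)) := by
      apply Real.sin_lt_sin_of_lt_of_le_pi_div_two <;> linarith
    have h2 : 0 ≤ Real.sin (4*(Real.pi/19)) := Real.sin_nonneg_of_nonneg_of_le_pi (by positivity) (by linarith)
    have h3 : 0 ≤ Real.sin (Real.pi/19) := Real.sin_nonneg_of_nonneg_of_le_pi (by positivity) (by linarith)
    have h4 : 0 ≤ Real.sin (5*(Real.pi/19)) := Real.sin_nonneg_of_nonneg_of_le_pi (by positivity) (by linarith)
    linarith
  have hc4pos : 0 < Real.cos (4*(Real.pi/19)) := Real.cos_pos_of_mem_Ioo ⟨by linarith, by linarith⟩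
  have key : (Real.sin (4*(Real.pi/19)) + 2*Real.sin (Real.pi/19) - 2*Real.sin (2*(Real.pi/19)) + 2*Real.sin (5*(Real.pi/19)) + 2*Real.sin (6*(Real.pi/19))) = Real.sqrt 19 * Real.cos (4*(Real.pi/19)) := by
    have h := Real.sqrt_sq hApos
    rw [← h, hA2, show (19:ℝ) * (Real.cos (4*(Real.pi/19)))^2 = ((Real.sqrt 19) * Real.cos (4*(Real.pi/19)))^2 by rw [mul_pow, Real.sq_sqrt (by norm_num : (19:ℝ) ≥ 0)], Real.sqrt_sq (by positivity)]
  have trig : Real.sin (4*(Real.pi/19)) + 4*Real.cos (4*(Real.pi/19))*(Real.sin (5*(Real.pi/19)) - Real.sin (6*(Real.pi/19)) + Real.sin (9*(Real.pi/19))) = (Real.sin (4*(Real.pi/19)) + 2*Real.sin (Real.pi/19) - 2*Real.sin (2*(Real.pi/19)) + 2*Real.sin (5*(Real.pi/19)) + 2*Real.sin (6*(Real.pi/19))) := by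
    rw [s4, s2, s5, s6, s9, c4]
    linear_combination (Real.sin (Real.pi/19) * ((-4) + (-8)*Real.cos (Real.pi/19) + (8)*Real.cos (Real.pi/19)^2 + (16)*Real.cos (Real.pi/19)^3)) * hm
  rw [show 4*Real.pi/19 = 4*(Real.pi/19) by ring, show 5*Real.pi/19 = 5*(Real.pi/19) by ring, show 6*Real.pi/19 = 6*(Real.pi/19) by ring, show 9*Real.pi/19 = 9*(Real.pi/19) by ring]
  have hmul : (Real.tan (4*(Real.pi/19)) + 4*Real.sin (5*(Real.pi/19)) - 4*Real.sin (6*(Real.pi/19)) + 4*Real.sin (9*(Real.pi/19))) * Real.cos (4*(Real.pi/19)) = Real.sqrt 19 * Real.cos (4*(Real.pi/19)) := by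
    rw [Real.tan_eq_sin_div_cos]
    have hdc : Real.sin (4*(Real.pi/19)) / Real.cos (4*(Real.pi/19)) * Real.cos (4*(Real.pi/19)) = Real.sin (4*(Real.pi/19)) := div_mul_cancel₀ _ hc4pos.ne'
    linear_combination hdc + trig + key
  exact mul_right_cancel₀ hc4pos.ne' hmul
end

section
/- tan(π/9) + 2·sin(π/9) − 2·sin(2π/9) + 2·sin(4π/9) = √3. -/
/-!
With `θ = π/9` we have `2θ = π/3 - θ` and `4θ = π/3 + θ`, so the two last sines combine to
`2 sin θ` and the left side is `tan θ + 4 sin θ`. Multiplying by `cos θ` gives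
`sin θ + 2 sin 2θ = sin θ + 2 sin (π/3 - θ)`, which equals `√3 cos θ` for every `θ`.
-/

open Real

lemma sin_pi_div_three_add_sub_sin_pi_div_three_sub (x : ℝ) :
    sin (π / 3 + x) - sin (π / 3 - x) = sin x := by
  rw [sin_add, sin_sub, cos_pi_div_three]
  ring

lemma sin_add_two_mul_sin_pi_div_three_sub (x : ℝ) :
    sin x + 2 * sin (π / 3 - x) = √3 * cos x := by
  rw [sin_sub, sin_pi_div_three, cos_pi_div_three]
  ring

lemma tan_pi_div_nine_add_four_mul_sin_pi_div_nine : tan (π / 9) + 4 * sin (π / 9) = √3 := by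
  have hcos : cos (π / 9) ≠ 0 :=
    (cos_pos_of_mem_Ioo ⟨by linarith [pi_pos], by linarith [pi_pos]⟩).ne'
  have h := sin_add_two_mul_sin_pi_div_three_sub (π / 9)
  rw [show π / 3 - π / 9 = 2 * (π / 9) by ring, sin_two_mul] at h
  rw [tan_eq_sin_div_cos]
  field_simp
  linarith

theorem stmt15 : Real.tan (Real.pi/9) + 2*Real.sin (Real.pi/9) - 2*Real.sin (2*Real.pi/9) + 2*Real.sin (4*Real.pi/9) = Real.sqrt 3 := by
  rw [show 2 * π / 9 = π / 3 - π / 9 by ring, show 4 * π / 9 = π / 3 + π / 9 by ring]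
  linarith [sin_pi_div_three_add_sub_sin_pi_div_three_sub (π / 9),
    tan_pi_div_nine_add_four_mul_sin_pi_div_nine]
end

section
/- With x = exp(2πi/11), one has 1 + 2·(x + x³ + x⁴ + x⁵ + x⁹) = i·√11. -/
theorem stmt17 (x : ℂ) (hx : x = Complex.exp (2*Real.pi*Complex.I/11)) :
    1 + 2*(x + x^3 + x^4 + x^5 + x^9) = Complex.I * Real.sqrt 11 := by
  have hθ : x = Complex.exp ((2*Real.pi/11 : ℝ) * Complex.I) := by
    rw [hx]; push_cast; ring_nf
  set θ : ℝ := 2*Real.pi/11 with hθdef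
  have him : ∀ k : ℕ, (x ^ k).im = Real.sin (k * θ) := by
    intro k
    rw [hθ, ← Complex.exp_nat_mul]
    have : (k : ℂ) * ((θ:ℝ) * Complex.I) = ((k * θ : ℝ) : ℂ) * Complex.I := by push_cast; ring
    rw [this, Complex.exp_ofReal_mul_I_im]
  have hpi : (0:ℝ) < Real.pi := Real.pi_pos
  have hs1 : Real.sin (1 * θ) > 0 := by
    apply Real.sin_pos_of_pos_of_lt_pi <;> rw [hθdef] <;> nlinarith
  have hs3 : Real.sin (3 * θ) > 0 := by
    apply Real.sin_pos_of_pos_of_lt_pi <;> rw [hθdef] <;> nlinarith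
  have hs4 : Real.sin (4 * θ) > 0 := by
    apply Real.sin_pos_of_pos_of_lt_pi <;> rw [hθdef] <;> nlinarith
  have hs5 : Real.sin (5 * θ) > 0 := by
    apply Real.sin_pos_of_pos_of_lt_pi <;> rw [hθdef] <;> nlinarith
  have hs9 : Real.sin (9 * θ) = -Real.sin (2 * θ) := by
    have h1 : (9:ℝ) * θ = (2*Real.pi - 2*θ) := by rw [hθdef]; ring
    rw [h1]
    rw [show 2*Real.pi - 2*θ = -(2*θ) + 2*Real.pi by ring, Real.sin_add_two_pi, Real.sin_neg]
  have hkey : Real.sin (2 * θ) < Real.sin (3 * θ) := by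
    have h3 : Real.sin (3 * θ) = Real.sin (Real.pi - 3*θ) := (Real.sin_pi_sub _).symm
    rw [h3]
    apply Real.sin_lt_sin_of_lt_of_le_pi_div_two <;> rw [hθdef] <;> nlinarith
  -- imaginary part of S is positive
  have hSim : (1 + 2*(x + x^3 + x^4 + x^5 + x^9)).im
      = 2 * (Real.sin (1*θ) + Real.sin (3*θ) + Real.sin (4*θ) + Real.sin (5*θ) + Real.sin (9*θ)) := by
    have e1 := him 1; have e3 := him 3; have e4 := him 4; have e5 := him 5; have e9 := him 9
    simp only [pow_one] at e1
    push_cast at e1 e3 e4 e5 e9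
    simp [Complex.add_im, Complex.mul_im, Complex.ofReal_im, e1, e3, e4, e5, e9]
    try ring
  have hSimpos : 0 < (1 + 2*(x + x^3 + x^4 + x^5 + x^9)).im := by
    rw [hSim, hs9]; nlinarith
  -- S^2 = -11
  have h11 : x ^ 11 = 1 := by
    rw [hθ, ← Complex.exp_nat_mul,
      show ((11:ℕ):ℂ) * ((θ:ℝ) * Complex.I) = 2*Real.pi*Complex.I by
        rw [hθdef]; push_cast; ring,
      Complex.exp_two_pi_mul_I]
  have hxne : x ≠ 1 := by
    intro h
    rw [h] at hSimpos
    norm_num at hSimpos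
  have hsum : 1 + x + x^2 + x^3 + x^4 + x^5 + x^6 + x^7 + x^8 + x^9 + x^10 = 0 := by
    have h0 : (x - 1) * (1 + x + x^2 + x^3 + x^4 + x^5 + x^6 + x^7 + x^8 + x^9 + x^10) = 0 := by
      linear_combination h11
    rcases mul_eq_zero.mp h0 with h | h
    · exact absurd (sub_eq_zero.mp h) hxne
    · exact h
  have hS2 : (1 + 2*(x + x^3 + x^4 + x^5 + x^9))^2 = -11 := by
    linear_combination (12 - 8*x + 8*x^4 - 4*x^7 + 4*x^8) * hsum
  -- conclude
  have hsq : ((Real.sqrt 11 : ℂ))^2 = 11 := by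
    rw [← Complex.ofReal_pow, Real.sq_sqrt (by norm_num : (11:ℝ) ≥ 0)]
    norm_num
  have hfac : (1 + 2*(x + x^3 + x^4 + x^5 + x^9) - Complex.I * Real.sqrt 11)
      * (1 + 2*(x + x^3 + x^4 + x^5 + x^9) + Complex.I * Real.sqrt 11) = 0 := by
    have hI : Complex.I^2 = -1 := Complex.I_sq
    linear_combination hS2 - Complex.I^2 * hsq - 11 * hI
  rcases mul_eq_zero.mp hfac with h | h
  · exact sub_eq_zero.mp h
  · exfalso
    have : (1 + 2*(x + x^3 + x^4 + x^5 + x^9)).im = -Real.sqrt 11 := by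
      have := congrArg Complex.im (eq_neg_of_add_eq_zero_left h)
      simpa [Complex.mul_im] using this
    rw [this] at hSimpos
    have := Real.sqrt_nonneg 11
    linarith
end

section
/- With x = exp(2πi/11), one has i·tan(3π/11) = −x − x² + x³ + x⁴ + x⁵ − x⁶ − x⁷ − x⁸ + x⁹ + x¹⁰, where tan(3π/11) is regarded as a complex number via the real tangent. -/
theorem stmt18 (x : ℂ) (hx : x = Complex.exp (2*Real.pi*Complex.I/11)) :
    Complex.I * (Real.tan (3*Real.pi/11) : ℂ) =
      -x - x^2 + x^3 + x^4 + x^5 - x^6 - x^7 - x^8 + x^9 + x^10 := by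
  have hpi : (0:ℝ) < Real.pi := Real.pi_pos
  have hx11 : x ^ 11 = 1 := by
    rw [hx, ← Complex.exp_nat_mul]
    rw [show (11:ℕ) * (2*(Real.pi:ℂ)*Complex.I/11) = 2*Real.pi*Complex.I by push_cast; ring]
    exact Complex.exp_two_pi_mul_I
  have hxne : x ≠ 1 := by
    intro h
    have him : x.im = Real.sin (2*Real.pi/11) := by
      rw [hx, show 2*(Real.pi:ℂ)*Complex.I/11 = ((2*Real.pi/11 : ℝ):ℂ) * Complex.I by
        push_cast; ring]
      exact Complex.exp_ofReal_mul_I_im _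
    have hs : Real.sin (2*Real.pi/11) > 0 := by
      apply Real.sin_pos_of_pos_of_lt_pi
      · positivity
      · nlinarith
    rw [h] at him
    simp at him
    nlinarith
  have hsum : 1 + x + x^2 + x^3 + x^4 + x^5 + x^6 + x^7 + x^8 + x^9 + x^10 = 0 := by
    have h : (x - 1) * (1 + x + x^2 + x^3 + x^4 + x^5 + x^6 + x^7 + x^8 + x^9 + x^10) = 0 := by
      linear_combination hx11
    rcases mul_eq_zero.mp h with h1 | h2
    · exact absurd (sub_eq_zero.mp h1) hxne
    · exact h2
  have hx3 : x^3 + 1 ≠ 0 := by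
    intro h
    have h3 : x^3 = -1 := by linear_combination h
    have : ((-1:ℂ))^11 = 1 := by
      rw [← h3, ← pow_mul]
      rw [show 3*11 = 11*3 by ring, pow_mul, hx11, one_pow]
    norm_num at this
  set t : ℂ := ((3*Real.pi/11 : ℝ) : ℂ) with ht
  set a : ℂ := Complex.exp (t * Complex.I) with ha
  have ha0 : a ≠ 0 := Complex.exp_ne_zero _
  have ha2 : a ^ 2 = x ^ 3 := by
    rw [ha, ← Complex.exp_nat_mul, hx, ← Complex.exp_nat_mul]
    congr 1
    simp only [ht]
    push_cast
    ring
  have hcos : Complex.cos t ≠ 0 := by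
    have hr : Real.cos (3*Real.pi/11) > 0 := by
      apply Real.cos_pos_of_mem_Ioo
      constructor <;> nlinarith
    rw [ht, ← Complex.ofReal_cos]
    exact_mod_cast hr.ne'
  have key2 : Complex.I * Complex.sin t * (x^3+1) = (x^3-1) * Complex.cos t := by
    rw [Complex.sin, Complex.cos, neg_mul, Complex.exp_neg, ← ha2, ← ha]
    field_simp
    linear_combination (1 - a^4) * Complex.I_sq
  have key : Complex.I * Complex.tan t * (x^3 + 1) = x^3 - 1 := by
    rw [Complex.tan_eq_sin_div_cos]
    field_simp [hcos]
    linear_combination key2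
  have htan : (Real.tan (3*Real.pi/11) : ℂ) = Complex.tan t := by
    rw [ht, ← Complex.ofReal_tan]
  rw [htan]
  have hS : (-x - x^2 + x^3 + x^4 + x^5 - x^6 - x^7 - x^8 + x^9 + x^10) * (x^3 + 1)
      = x^3 - 1 := by
    linear_combination (x^3 - 2*x + 1) * hsum
  exact mul_right_cancel₀ hx3 (key.trans hS.symm)
end
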